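/- arXiv:1009.5302 — 4 statements merged into one kernel-verified Lean document; each statement's English description precedes it below -/
import Mathlib

section
/- Under the intrinsic graph setup below, fix n̄ = η̄₂ b₂ + τ̄₁ e₃ ∈ B^N_{n₀,s} and set η̄₁ = φ₂(n̄) and x̄ = Φ₂(n̄) = η̄₁ b₁ + η̄₂ b₂ + τ̄ e₃ (so that τ̄ = τ̄₁ − η̄₁ η̄₂ det C). Then for points n = η b₂ + τ e₃ ∈ B^N_{n₀,s} the following Taylor-type expansion holds: f₁(Φ₂(n)) = f₁(Φ₂(n̄)) − ((η − η̄₂)/Y₁f₂(x̄)) · det [[Y₁f₁(x̄), Y₂f₁(x̄)],[Y₁f₂(x̄), Y₂f₂(x̄)]] + o(‖(η − η̄₂) b₂ + τ' e₃‖), where τ' = τ − τ̄ − 2η η̄₁ det C + η̄₁ η̄₂ det C, and the remainder is o of the homogeneous norm as ‖(η − η̄₂) b₂ + τ' e₃‖ → 0. -/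
noncomputable section

open Set

/-- The first Heisenberg group as `ℝ³`. -/
abbrev Hei : Type := ℝ × ℝ × ℝ

/-- The Heisenberg group product:
`x · y = x + y + (x₁,₁ y₁,₂ − y₁,₁ x₁,₂) e₃`. -/
def hmul (x y : Hei) : Hei :=
  (x.1 + y.1, x.2.1 + y.2.1, x.2.2 + y.2.2 + (x.1 * y.2.1 - y.1 * x.2.1))

/-- The Heisenberg group inverse `x⁻¹ = -x`. -/
def hinv (x : Hei) : Hei := (-x.1, -x.2.1, -x.2.2)

/-- The intrinsic dilation `δ_r(x) = r x₁ + r² x₂`. -/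
def hdil (r : ℝ) (x : Hei) : Hei := (r * x.1, r * x.2.1, r ^ 2 * x.2.2)

/-- The homogeneous norm `‖x‖ = max {|x₁|, √|x₂|}`. -/
def hnorm (x : Hei) : ℝ :=
  max (Real.sqrt (x.1 ^ 2 + x.2.1 ^ 2)) (Real.sqrt |x.2.2|)

/-- The homogeneous distance `d(x,y) = ‖x⁻¹ · y‖`. -/
def hdist (x y : Hei) : ℝ := hnorm (hmul (hinv x) y)

/-- `f` is (Pansu) differentiable at `x` with differential `L`: `L` is linear (bundled),
homogeneous with respect to the intrinsic dilations, and
`f y = f x + L (x⁻¹ · y) + o (d (x, y))` as `d (x, y) → 0`. -/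
def IsHDerivAt {F : Type*} [NormedAddCommGroup F] [NormedSpace ℝ F]
    (f : Hei → F) (L : Hei →L[ℝ] F) (x : Hei) : Prop :=
  (∀ r : ℝ, 0 < r → ∀ z : Hei, L (hdil r z) = r • L z) ∧
  ∀ ε : ℝ, 0 < ε → ∃ δ : ℝ, 0 < δ ∧ ∀ y : Hei, hdist x y ≤ δ →
    ‖f y - f x - L (hmul (hinv x) y)‖ ≤ ε * hdist x y

/-- `f ∈ C¹_H(Ω, F)` with horizontal gradient `gradf`: `f` is differentiable at every point
of `Ω` with differential `gradf x`, depending continuously on `x ∈ Ω`. -/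
def C1H {F : Type*} [NormedAddCommGroup F] [NormedSpace ℝ F]
    (Ω : Set Hei) (f : Hei → F) (gradf : Hei → Hei →L[ℝ] F) : Prop :=
  (∀ x ∈ Ω, IsHDerivAt f (gradf x) x) ∧ ContinuousOn gradf Ω

/-- The horizontal unit vector `b₁ = c₁¹ e₁ + c₁² e₂`. -/
def b1v (c11 c12 : ℝ) : Hei := (c11, c12, 0)

/-- The horizontal vector `b₂ = c₂¹ e₁ + c₂² e₂`. -/
def b2v (c21 c22 : ℝ) : Hei := (c21, c22, 0)

/-- The embedding of the vertical subgroup `N = span {b₂, e₃}` in `ℍ`,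
`(η, t) ↦ η b₂ + t e₃`. -/
def Nemb (c21 c22 : ℝ) (p : ℝ × ℝ) : Hei := (p.1 * c21, p.1 * c22, p.2)

/-- The intrinsic graph mapping `Φ₂ (n) = n · (φ₂ (n) b₁)`, in the coordinates `(η, t)`
of `N`. -/
def intrinsicGraph (c11 c12 c21 c22 : ℝ) (φ₂ : ℝ × ℝ → ℝ) (p : ℝ × ℝ) : Hei :=
  hmul (Nemb c21 c22 p) (φ₂ p • b1v c11 c12)

lemma hnorm_nonneg (x : Hei) : 0 ≤ hnorm x :=
  le_trans (Real.sqrt_nonneg _) (le_max_left _ _)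

lemma vert_zero {F : Type*} [NormedAddCommGroup F] [NormedSpace ℝ F] (L : Hei →L[ℝ] F)
    (h : ∀ r : ℝ, 0 < r → ∀ z : Hei, L (hdil r z) = r • L z) (t : ℝ) :
    L ((0 : ℝ), (0 : ℝ), t) = 0 := by
  have h2 := h 2 (by norm_num) ((0 : ℝ), (0 : ℝ), t)
  have hd : hdil 2 ((0 : ℝ), (0 : ℝ), t) = (4 : ℝ) • (((0 : ℝ), (0 : ℝ), t) : Hei) := by
    simp [hdil, Prod.ext_iff]; norm_num
  rw [hd, map_smul] at h2
  have : (2 : ℝ) • L ((0 : ℝ), (0 : ℝ), t) = 0 := by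
    have := sub_eq_zero.mpr h2
    rw [← sub_smul] at this
    norm_num at this
    simpa using this
  simpa using this

lemma L_eval {F : Type*} [NormedAddCommGroup F] [NormedSpace ℝ F] (L : Hei →L[ℝ] F)
    (h : ∀ r : ℝ, 0 < r → ∀ z : Hei, L (hdil r z) = r • L z)
    (a b w c11 c12 c21 c22 : ℝ) :
    L ((a*c11 + b*c21, a*c12 + b*c22, w) : Hei)
      = a • L (b1v c11 c12) + b • L (b2v c21 c22) := by
  have hz : ((a*c11 + b*c21, a*c12 + b*c22, w) : Hei)
      = a • b1v c11 c12 + b • b2v c21 c22 + (((0:ℝ), (0:ℝ), w) : Hei) := by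
    simp [b1v, b2v, Prod.ext_iff]
  rw [hz, map_add, map_add, map_smul, map_smul, vert_zero L h, add_zero]

lemma graph_diff (c11 c12 c21 c22 : ℝ) (φ₂ : ℝ × ℝ → ℝ) (eta2 tau1 eta tau : ℝ) :
    hmul (hinv (intrinsicGraph c11 c12 c21 c22 φ₂ (eta2, tau1)))
        (intrinsicGraph c11 c12 c21 c22 φ₂ (eta, tau))
    = (((φ₂ (eta, tau) - φ₂ (eta2, tau1)) * c11 + (eta - eta2) * c21,
        (φ₂ (eta, tau) - φ₂ (eta2, tau1)) * c12 + (eta - eta2) * c22,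
        (tau - (tau1 - φ₂ (eta2, tau1) * eta2 * (c11 * c22 - c12 * c21))
          - 2 * eta * φ₂ (eta2, tau1) * (c11 * c22 - c12 * c21)
          + φ₂ (eta2, tau1) * eta2 * (c11 * c22 - c12 * c21))
          - (c11 * c22 - c12 * c21) * (eta - eta2) * (φ₂ (eta, tau) - φ₂ (eta2, tau1))) : Hei) := by
  simp only [intrinsicGraph, hmul, hinv, Nemb, b1v, Prod.smul_mk, smul_eq_mul, Prod.ext_iff,
    Prod.fst, Prod.snd]
  refine ⟨by ring, by ring, by ring⟩

lemma sigma_eq (c21 c22 : ℝ) (hb2 : c21 ^ 2 + c22 ^ 2 = 1) (b t : ℝ) :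
    hnorm (Nemb c21 c22 (b, t)) = max |b| (Real.sqrt |t|) := by
  have : (b * c21) ^ 2 + (b * c22) ^ 2 = b ^ 2 := by nlinarith
  simp only [hnorm, Nemb]
  rw [this, Real.sqrt_sq_eq_abs]

lemma horiz_bound (c11 c12 c21 c22 : ℝ) (hb1 : c11 ^ 2 + c12 ^ 2 = 1)
    (hb2 : c21 ^ 2 + c22 ^ 2 = 1) (a b : ℝ) :
    Real.sqrt ((a * c11 + b * c21) ^ 2 + (a * c12 + b * c22) ^ 2) ≤ |a| + |b| := by
  have ht2 : (c11 * c21 + c12 * c22) ^ 2 ≤ 1 := by nlinarith [sq_nonneg (c11 * c22 - c12 * c21)]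
  have ht : |c11 * c21 + c12 * c22| ≤ 1 := (sq_le_one_iff_abs_le_one _).mp ht2
  have h1 : a * b * (c11 * c21 + c12 * c22) ≤ |a| * |b| := by
    calc a * b * (c11 * c21 + c12 * c22) ≤ |a * b * (c11 * c21 + c12 * c22)| := le_abs_self _
      _ = |a * b| * |c11 * c21 + c12 * c22| := abs_mul _ _
      _ ≤ |a * b| * 1 := mul_le_mul_of_nonneg_left ht (abs_nonneg _)
      _ = |a| * |b| := by rw [mul_one, abs_mul]
  have key : (a * c11 + b * c21) ^ 2 + (a * c12 + b * c22) ^ 2 ≤ (|a| + |b|) ^ 2 := by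
    nlinarith [sq_abs a, sq_abs b]
  calc Real.sqrt ((a * c11 + b * c21) ^ 2 + (a * c12 + b * c22) ^ 2)
      ≤ Real.sqrt ((|a| + |b|) ^ 2) := Real.sqrt_le_sqrt key
    _ = |a| + |b| := Real.sqrt_sq (by positivity)

lemma sqrt_third_bound (t c b a : ℝ) :
    Real.sqrt |t - c * b * a| ≤ Real.sqrt |t| + (|c| * |b| + |a|) / 2 := by
  have h1 : |t - c * b * a| ≤ |t| + |c * b * a| := abs_sub _ _
  have h2 : Real.sqrt |t - c * b * a| ≤ Real.sqrt |t| + Real.sqrt |c * b * a| := by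
    have hsq : |t| + |c * b * a| ≤ (Real.sqrt |t| + Real.sqrt |c * b * a|) ^ 2 := by
      nlinarith [Real.sq_sqrt (abs_nonneg t), Real.sq_sqrt (abs_nonneg (c * b * a)),
        Real.sqrt_nonneg |t|, Real.sqrt_nonneg |c * b * a|]
    calc Real.sqrt |t - c * b * a| ≤ Real.sqrt ((Real.sqrt |t| + Real.sqrt |c * b * a|) ^ 2) :=
          Real.sqrt_le_sqrt (h1.trans hsq)
      _ = _ := Real.sqrt_sq (by positivity)
  have h3 : Real.sqrt |c * b * a| ≤ (|c| * |b| + |a|) / 2 := by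
    have hle : |c * b * a| ≤ ((|c| * |b| + |a|) / 2) ^ 2 := by
      rw [abs_mul, abs_mul]
      nlinarith [sq_nonneg (|c| * |b| - |a|), abs_nonneg a, abs_nonneg b, abs_nonneg c,
        mul_nonneg (abs_nonneg c) (abs_nonneg b)]
    calc Real.sqrt |c * b * a| ≤ Real.sqrt (((|c| * |b| + |a|) / 2) ^ 2) := Real.sqrt_le_sqrt hle
      _ = _ := Real.sqrt_sq (by positivity)
  linarith


set_option maxHeartbeats 1000000 in
/-- **Taylor-type expansion (Theorem 3.1).** Under the intrinsic graph setup, fix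
`n̄ = η̄₂ b₂ + τ̄₁ e₃ ∈ B^N_{n₀,s}`, set `η̄₁ = φ₂ n̄`, `x̄ = Φ₂ n̄` and
`τ̄ = τ̄₁ − η̄₁ η̄₂ det C`. Then, for `n = η b₂ + τ e₃ ∈ B^N_{n₀,s}`,
`f₁ (Φ₂ n) = f₁ (Φ₂ n̄) − ((η − η̄₂)/Y₁f₂(x̄)) · det [[Y₁f₁(x̄), Y₂f₁(x̄)], [Y₁f₂(x̄), Y₂f₂(x̄)]]
  + o (‖(η − η̄₂) b₂ + τ' e₃‖)`, where `τ' = τ − τ̄ − 2 η η̄₁ det C + η̄₁ η̄₂ det C`. -/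
theorem taylor_type_expansion
    (Ω : Set Hei) (hΩ : IsOpen Ω)
    (f₁ f₂ : Hei → ℝ) (gradf₁ gradf₂ : Hei → Hei →L[ℝ] ℝ)
    (hf₁ : C1H Ω f₁ gradf₁) (hf₂ : C1H Ω f₂ gradf₂)
    (c11 c12 c21 c22 : ℝ)
    (hb1 : c11 ^ 2 + c12 ^ 2 = 1) (hb2 : c21 ^ 2 + c22 ^ 2 = 1)
    (detC : ℝ) (hdetC : detC = c11 * c22 - c12 * c21) (hdet : detC ≠ 0)
    (x₀ : Hei) (hx₀ : x₀ ∈ Ω)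
    (hsurj : Function.Surjective (fun z : Hei => (gradf₁ x₀ z, gradf₂ x₀ z)))
    (hY1x₀ : gradf₂ x₀ (b1v c11 c12) ≠ 0)
    (n₀ : ℝ × ℝ) (r₀ : ℝ) (hfact : hmul (Nemb c21 c22 n₀) (r₀ • b1v c11 c12) = x₀)
    (s : ℝ) (hs : 0 < s)
    (φ₂ : ℝ × ℝ → ℝ)
    (ballN : Set (ℝ × ℝ))
    (hball : ballN = {p : ℝ × ℝ | hdist (Nemb c21 c22 n₀) (Nemb c21 c22 p) < s})
    (hφcont : ContinuousOn φ₂ ballN)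
    (hmaps : ∀ p ∈ ballN, intrinsicGraph c11 c12 c21 c22 φ₂ p ∈ Ω)
    (hΦ₀ : intrinsicGraph c11 c12 c21 c22 φ₂ n₀ = x₀)
    (hlevel : ∀ p ∈ ballN, f₂ (intrinsicGraph c11 c12 c21 c22 φ₂ p) = f₂ x₀)
    (hY1 : ∀ p ∈ ballN, gradf₂ (intrinsicGraph c11 c12 c21 c22 φ₂ p) (b1v c11 c12) ≠ 0)
    (etaBar2 tauBar1 : ℝ) (hnbar : (etaBar2, tauBar1) ∈ ballN)
    (etaBar1 : ℝ) (hetaBar1 : etaBar1 = φ₂ (etaBar2, tauBar1))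
    (xBar : Hei) (hxBar : xBar = intrinsicGraph c11 c12 c21 c22 φ₂ (etaBar2, tauBar1))
    (tauBar : ℝ) (htauBar : tauBar = tauBar1 - etaBar1 * etaBar2 * detC)
    (D : ℝ)
    (hD : D = gradf₁ xBar (b1v c11 c12) * gradf₂ xBar (b2v c21 c22)
           - gradf₁ xBar (b2v c21 c22) * gradf₂ xBar (b1v c11 c12)) :
    ∀ ε : ℝ, 0 < ε → ∃ δ : ℝ, 0 < δ ∧ ∀ η τ : ℝ, (η, τ) ∈ ballN →
      hnorm (Nemb c21 c22
          (η - etaBar2, τ - tauBar - 2 * η * etaBar1 * detC + etaBar1 * etaBar2 * detC)) ≤ δ →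
      |f₁ (intrinsicGraph c11 c12 c21 c22 φ₂ (η, τ))
          - f₁ (intrinsicGraph c11 c12 c21 c22 φ₂ (etaBar2, tauBar1))
          + ((η - etaBar2) / gradf₂ xBar (b1v c11 c12)) * D|
        ≤ ε * hnorm (Nemb c21 c22
          (η - etaBar2, τ - tauBar - 2 * η * etaBar1 * detC + etaBar1 * etaBar2 * detC)) := by
  intro ε hε
  have hxBarΩ : xBar ∈ Ω := by rw [hxBar]; exact hmaps _ hnbar
  set A₁ := gradf₁ xBar (b1v c11 c12) with hA₁def
  set A₂ := gradf₁ xBar (b2v c21 c22) with hA₂def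
  set B₁ := gradf₂ xBar (b1v c11 c12) with hB₁def
  set B₂ := gradf₂ xBar (b2v c21 c22) with hB₂def
  have hB₁ : B₁ ≠ 0 := by rw [hB₁def, hxBar]; exact hY1 _ hnbar
  have habsB₁ : 0 < |B₁| := abs_pos.mpr hB₁
  obtain ⟨hhom₁, hTay₁⟩ := hf₁.1 xBar hxBarΩ
  obtain ⟨hhom₂, hTay₂⟩ := hf₂.1 xBar hxBarΩ
  set C0 : ℝ := 2 + |detC| with hC0def
  have hC0pos : (0:ℝ) < C0 := by positivity
  set P : ℝ := 2 * C0 * |B₂| + 4 * C0 * |B₁| with hPdef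
  have hP : 0 < P := by nlinarith [mul_pos hC0pos habsB₁, mul_nonneg hC0pos.le (abs_nonneg B₂)]
  set ε₁ : ℝ := ε * |B₁| / (2 * P) with hε₁def
  have hε₁pos : 0 < ε₁ := by positivity
  set ε₂ : ℝ := min (|B₁| / (2 * C0)) (ε * |B₁| ^ 2 / (2 * P * (|A₁| + 1))) with hε₂def
  have hε₂pos : 0 < ε₂ := by
    apply lt_min
    · positivity
    · positivity
  have hε₂C : ε₂ * (2 * C0) ≤ |B₁| :=
    (le_div_iff₀ (by positivity)).mp (min_le_left _ _)
  have hε₂b : ε₂ * (2 * P * (|A₁| + 1)) ≤ ε * |B₁| ^ 2 :=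
    (le_div_iff₀ (by positivity)).mp (min_le_right _ _)
  have hε₁P : ε₁ * P = ε * |B₁| / 2 := by
    rw [hε₁def]; field_simp
  obtain ⟨δ₁, hδ₁pos, hT₁⟩ := hTay₁ ε₁ hε₁pos
  obtain ⟨δ₂, hδ₂pos, hT₂⟩ := hTay₂ ε₂ hε₂pos
  set δ'' : ℝ := min δ₁ δ₂ with hδ''def
  have hδ''pos : 0 < δ'' := lt_min hδ₁pos hδ₂pos
  set ρ : ℝ := δ'' / (2 * C0) with hρdef
  have hρpos : 0 < ρ := by positivity
  have hc : ContinuousWithinAt φ₂ ballN (etaBar2, tauBar1) := hφcont _ hnbar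
  rw [Metric.continuousWithinAt_iff] at hc
  obtain ⟨δ', hδ'pos, hc⟩ := hc ρ hρpos
  set M : ℝ := |etaBar1 * detC| with hMdef
  refine ⟨min (δ'' / (4 * C0)) (min 1 (δ' / (2 * (1 + 2 * M)))), by positivity, ?_⟩
  set δ : ℝ := min (δ'' / (4 * C0)) (min 1 (δ' / (2 * (1 + 2 * M)))) with hδdef
  have hδpos : 0 < δ := by positivity
  have hδa : δ ≤ δ'' / (4 * C0) := min_le_left _ _
  have hδ1 : δ ≤ 1 := le_trans (min_le_right _ _) (min_le_left _ _)
  have hδd' : δ ≤ δ' / (2 * (1 + 2 * M)) := le_trans (min_le_right _ _) (min_le_right _ _)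
  have hδ''₁ : δ'' ≤ δ₁ := min_le_left _ _
  have hδ''₂ : δ'' ≤ δ₂ := min_le_right _ _
  have hM0 : 0 ≤ M := abs_nonneg _
  clear_value C0 P ε₁ ε₂ δ'' ρ M δ
  intro η τ hn hσδ
  rw [← hxBar]
  set a : ℝ := φ₂ (η, τ) - etaBar1 with hadef
  set b : ℝ := η - etaBar2 with hbdef
  set t' : ℝ := τ - tauBar - 2 * η * etaBar1 * detC + etaBar1 * etaBar2 * detC with ht'def
  set σ : ℝ := hnorm (Nemb c21 c22 (b, t')) with hσdef
  have hσ_eq : σ = max |b| (Real.sqrt |t'|) := sigma_eq c21 c22 hb2 b t'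
  have hσ0 : 0 ≤ σ := by rw [hσdef]; exact hnorm_nonneg _
  have hbσ : |b| ≤ σ := by rw [hσ_eq]; exact le_max_left _ _
  have htσ : Real.sqrt |t'| ≤ σ := by rw [hσ_eq]; exact le_max_right _ _
  have hbδ : |b| ≤ δ := hbσ.trans hσδ
  have ht'δ : |t'| ≤ δ ^ 2 := by
    have h := htσ.trans hσδ
    nlinarith only [h, Real.sq_sqrt (abs_nonneg t'), Real.sqrt_nonneg |t'|, hδpos]
  -- continuity gives |a| < ρ
  have hτ1 : τ - tauBar1 = t' + 2 * etaBar1 * detC * b := by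
    rw [ht'def, hbdef, htauBar]; ring
  have hτclose : |τ - tauBar1| ≤ δ ^ 2 + 2 * M * δ := by
    rw [hτ1]
    calc |t' + 2 * etaBar1 * detC * b| ≤ |t'| + |2 * etaBar1 * detC * b| := abs_add_le _ _
      _ = |t'| + 2 * M * |b| := by
          rw [hMdef]; rw [show (2:ℝ) * etaBar1 * detC * b = 2 * (etaBar1 * detC * b) by ring]
          rw [abs_mul, abs_mul]; simp [abs_of_nonneg]; ring
      _ ≤ δ ^ 2 + 2 * M * δ := by
          nlinarith only [ht'δ, hbδ, hM0, abs_nonneg b]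
  have hdistlt : dist ((η, τ) : ℝ × ℝ) ((etaBar2, tauBar1) : ℝ × ℝ) < δ' := by
    rw [Prod.dist_eq]
    have h2 : (1 + 2 * M) * δ ≤ δ' / 2 := by
      rw [le_div_iff₀ (by nlinarith only [hM0] : (0:ℝ) < 2 * (1 + 2 * M))] at hδd'
      linarith only [hδd']
    apply max_lt
    · rw [Real.dist_eq]
      have h3 : |η - etaBar2| ≤ δ := hbδ
      nlinarith only [h3, h2, hM0, hδpos]
    · rw [Real.dist_eq]
      have hδsq : δ ^ 2 ≤ δ := by nlinarith only [hδ1, hδpos]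
      calc |τ - tauBar1| ≤ δ ^ 2 + 2 * M * δ := hτclose
        _ ≤ (1 + 2 * M) * δ := by linarith only [hδsq]
        _ ≤ δ' / 2 := h2
        _ < δ' := by linarith
  have haρ : |a| < ρ := by
    have := hc hn hdistlt
    rw [Real.dist_eq, ← hetaBar1] at this
    rw [hadef]
    exact this
  have ha0 : 0 ≤ |a| := abs_nonneg a
  -- the group-theoretic increment
  have hzeq : hmul (hinv xBar) (intrinsicGraph c11 c12 c21 c22 φ₂ (η, τ))
      = ((a * c11 + b * c21, a * c12 + b * c22, t' - detC * b * a) : Hei) := by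
    rw [hxBar, graph_diff]
    rw [hadef, hbdef, ht'def, htauBar, hdetC, hetaBar1]
  set d : ℝ := hdist xBar (intrinsicGraph c11 c12 c21 c22 φ₂ (η, τ)) with hddef
  have hd0 : 0 ≤ d := by rw [hddef, hdist]; exact hnorm_nonneg _
  -- bound d by C0 * (|a| + 2σ)
  have hdC0 : d ≤ C0 * (|a| + 2 * σ) := by
    rw [hddef, hdist, hzeq]
    have h1 := horiz_bound c11 c12 c21 c22 hb1 hb2 a b
    have h2 := sqrt_third_bound t' detC b a
    simp only [hnorm]
    apply max_le
    · calc Real.sqrt ((a * c11 + b * c21) ^ 2 + (a * c12 + b * c22) ^ 2) ≤ |a| + |b| := h1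
        _ ≤ C0 * (|a| + 2 * σ) := by
            rw [hC0def]
            nlinarith only [hbσ, hσ0, abs_nonneg a,
              mul_nonneg (abs_nonneg detC) (abs_nonneg a),
              mul_nonneg (abs_nonneg detC) hσ0]
    · calc Real.sqrt |t' - detC * b * a| ≤ Real.sqrt |t'| + (|detC| * |b| + |a|) / 2 := h2
        _ ≤ σ + (|detC| * σ + |a|) / 2 := by
            have hmm := mul_le_mul_of_nonneg_left hbσ (abs_nonneg detC)
            linarith only [hmm, htσ]
        _ ≤ C0 * (|a| + 2 * σ) := by
            rw [hC0def]
            nlinarith only [hσ0, abs_nonneg a,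
              mul_nonneg (abs_nonneg detC) (abs_nonneg a),
              mul_nonneg (abs_nonneg detC) hσ0]
  clear_value a b t' σ d
  -- d is small enough
  have hdsmall : d ≤ δ'' := by
    have h1 : |a| * (2 * C0) ≤ δ'' := by
      have h := haρ.le
      rw [hρdef, le_div_iff₀ (by nlinarith only [hC0pos] : (0:ℝ) < 2 * C0)] at h
      exact h
    have h2 : σ * (4 * C0) ≤ δ'' := by
      have h := hσδ.trans hδa
      rw [le_div_iff₀ (by nlinarith only [hC0pos] : (0:ℝ) < 4 * C0)] at h
      exact h
    linarith only [hdC0, h1, h2]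
  have hdδ₁ : d ≤ δ₁ := hdsmall.trans hδ''₁
  have hdδ₂ : d ≤ δ₂ := hdsmall.trans hδ''₂
  -- Taylor estimates
  set y : Hei := intrinsicGraph c11 c12 c21 c22 φ₂ (η, τ) with hydef
  have hL1 : gradf₁ xBar (hmul (hinv xBar) y) = a * A₁ + b * A₂ := by
    rw [hydef, hzeq, L_eval (gradf₁ xBar) hhom₁ a b _ c11 c12 c21 c22]
    rw [smul_eq_mul, smul_eq_mul, ← hA₁def, ← hA₂def]
  have hL2 : gradf₂ xBar (hmul (hinv xBar) y) = a * B₁ + b * B₂ := by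
    rw [hydef, hzeq, L_eval (gradf₂ xBar) hhom₂ a b _ c11 c12 c21 c22]
    rw [smul_eq_mul, smul_eq_mul, ← hB₁def, ← hB₂def]
  have hE₁ : |f₁ y - f₁ xBar - (a * A₁ + b * A₂)| ≤ ε₁ * d := by
    have := hT₁ y (by rw [hydef, ← hddef]; exact hdδ₁)
    rw [Real.norm_eq_abs, hL1, hydef, ← hddef] at this
    rw [← hydef] at this
    exact this
  have hy2 : f₂ y = f₂ xBar := by
    rw [hydef, hlevel _ hn, hxBar, hlevel _ hnbar]
  have hE₂ : |a * B₁ + b * B₂| ≤ ε₂ * d := by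
    have := hT₂ y (by rw [hydef, ← hddef]; exact hdδ₂)
    rw [Real.norm_eq_abs, hL2, hy2, hydef, ← hddef, sub_self, zero_sub, abs_neg] at this
    exact this
  -- bound |a| * |B₁|
  have haB : |a| * |B₁| ≤ ε₂ * d + |B₂| * |b| := by
    have h1 : |a * B₁| ≤ |a * B₁ + b * B₂| + |b * B₂| := by
      calc |a * B₁| = |(a * B₁ + b * B₂) - b * B₂| := by ring_nf
        _ ≤ |a * B₁ + b * B₂| + |b * B₂| := abs_sub _ _
    rw [abs_mul] at h1
    rw [abs_mul, mul_comm |b| |B₂|] at h1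
    linarith only [h1, hE₂]
  -- d * |B₁| ≤ P * σ
  have hdP : d * |B₁| ≤ P * σ := by
    have s1 := mul_le_mul_of_nonneg_right hdC0 (abs_nonneg B₁)
    have s2 := mul_le_mul_of_nonneg_left haB hC0pos.le
    have s4 := mul_le_mul_of_nonneg_right hε₂C hd0
    have s5 := mul_le_mul_of_nonneg_left hbσ (mul_nonneg hC0pos.le (abs_nonneg B₂))
    rw [hPdef]
    linarith only [s1, s2, s4, s5]
  -- main identity
  have hid : (f₁ y - f₁ xBar + (b / B₁) * D) * B₁
      = B₁ * (f₁ y - f₁ xBar - (a * A₁ + b * A₂)) + A₁ * (a * B₁ + b * B₂) := by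
    rw [hD]
    field_simp
    ring
  have hnum : |f₁ y - f₁ xBar + (b / B₁) * D| * |B₁| ≤ ε₁ * d * |B₁| + |A₁| * (ε₂ * d) := by
    rw [← abs_mul, hid]
    calc |B₁ * (f₁ y - f₁ xBar - (a * A₁ + b * A₂)) + A₁ * (a * B₁ + b * B₂)|
        ≤ |B₁ * (f₁ y - f₁ xBar - (a * A₁ + b * A₂))| + |A₁ * (a * B₁ + b * B₂)| := abs_add_le _ _
      _ = |B₁| * |f₁ y - f₁ xBar - (a * A₁ + b * A₂)| + |A₁| * |a * B₁ + b * B₂| := by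
          rw [abs_mul, abs_mul]
      _ ≤ |B₁| * (ε₁ * d) + |A₁| * (ε₂ * d) :=
          add_le_add (mul_le_mul_of_nonneg_left hE₁ (abs_nonneg _))
            (mul_le_mul_of_nonneg_left hE₂ (abs_nonneg _))
      _ = ε₁ * d * |B₁| + |A₁| * (ε₂ * d) := by ring
  -- conclude
  have t1 : ε₁ * d * |B₁| ≤ ε * |B₁| * σ / 2 := by
    have h := mul_le_mul_of_nonneg_left hdP hε₁pos.le
    have h2 : ε₁ * (P * σ) = ε * |B₁| / 2 * σ := by rw [← hε₁P]; ring
    linarith only [h, h2]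
  have t2 : |A₁| * (ε₂ * d) * |B₁| ≤ ε * |B₁| ^ 2 * σ / 2 := by
    have h1 := mul_le_mul_of_nonneg_left hdP (mul_nonneg (abs_nonneg A₁) hε₂pos.le)
    have h2 := mul_le_mul_of_nonneg_right hε₂b hσ0
    have h3 : 0 ≤ ε₂ * P * σ := mul_nonneg (mul_nonneg hε₂pos.le hP.le) hσ0
    linarith only [h1, h2, h3]
  have hfin : |f₁ y - f₁ xBar + (b / B₁) * D| * |B₁| ^ 2 ≤ (ε * σ) * |B₁| ^ 2 := by
    have h := mul_le_mul_of_nonneg_right hnum (abs_nonneg B₁)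
    have h1 := mul_le_mul_of_nonneg_right t1 (abs_nonneg B₁)
    linarith only [h, h1, t2]
  have := le_of_mul_le_mul_right (by
    calc |f₁ y - f₁ xBar + (b / B₁) * D| * |B₁| ^ 2 ≤ (ε * σ) * |B₁| ^ 2 := hfin
    ) (by positivity : (0:ℝ) < |B₁| ^ 2)
  exact this
end
end

section
/- Under the intrinsic graph setup below, fix n̄ = η̄₂ b₂ + τ̄₁ e₃ ∈ B^N_{n₀,s}, set η̄₁ = φ₂(n̄), x̄ = Φ₂(n̄), and z̄ = b₂ + 2 η̄₁ det(C) e₃ ∈ N. Then f₁∘Φ₂ is partially differentiable at n̄ along the direction z̄, and ∂_{z̄}(f₁∘Φ₂)(n̄) = lim_{s→0} [f₁(Φ₂(n̄ + s z̄)) − f₁(Φ₂(n̄))]/s = −(1/Y₁f₂(x̄)) · det [[Y₁f₁(x̄), Y₂f₁(x̄)],[Y₁f₂(x̄), Y₂f₂(x̄)]]. -/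
noncomputable section

open Set

private lemma vert_vanish (L : Hei →L[ℝ] ℝ)
    (h : ∀ r : ℝ, 0 < r → ∀ z : Hei, L (hdil r z) = r • L z) (t : ℝ) :
    L ((0, 0, t) : Hei) = 0 := by
  have h2 := h 2 (by norm_num) (0, 0, t)
  have hd : hdil 2 ((0,0,t) : Hei) = ((4:ℝ) • ((0,0,t) : Hei)) := by
    simp [hdil, Prod.ext_iff]; norm_num
  rw [hd, map_smul] at h2
  simp only [smul_eq_mul] at h2
  linarith

private lemma apply_L (L : Hei →L[ℝ] ℝ)
    (h : ∀ r : ℝ, 0 < r → ∀ z : Hei, L (hdil r z) = r • L z)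
    (c11 c12 c21 c22 a b w : ℝ) :
    L ((a * c21 + b * c11, a * c22 + b * c12, w) : Hei)
      = a * L (b2v c21 c22) + b * L (b1v c11 c12) := by
  have hsum : ((a * c21 + b * c11, a * c22 + b * c12, w) : Hei)
      = a • b2v c21 c22 + b • b1v c11 c12 + ((0,0,w) : Hei) := by
    simp [b1v, b2v, Prod.ext_iff]
  rw [hsum, map_add, map_add, map_smul, map_smul, vert_vanish L h w]
  simp

private lemma key_coord (c11 c12 c21 c22 detC : ℝ) (hdetC : detC = c11 * c22 - c12 * c21)
    (φ₂ : ℝ × ℝ → ℝ) (etaBar2 tauBar1 u A B : ℝ)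
    (hA : A = φ₂ (etaBar2 + u, tauBar1 + u * (2 * B * detC)))
    (hB : B = φ₂ (etaBar2, tauBar1)) :
    hmul (hinv (intrinsicGraph c11 c12 c21 c22 φ₂ (etaBar2, tauBar1)))
      (intrinsicGraph c11 c12 c21 c22 φ₂ (etaBar2 + u, tauBar1 + u * (2 * B * detC)))
    = ((u * c21 + (A - B) * c11, u * c22 + (A - B) * c12,
        -(detC * (u * (A - B)))) : Hei) := by
  subst hdetC
  simp only [intrinsicGraph, Nemb, hmul, hinv, b1v, Prod.smul_mk, smul_eq_mul,
    smul_zero, Prod.ext_iff, ← hA, ← hB]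
  refine ⟨by ring, by ring, by ring⟩

private lemma hnorm_bound (c11 c12 c21 c22 detC u d : ℝ)
    (hb1 : c11 ^ 2 + c12 ^ 2 = 1) (hb2 : c21 ^ 2 + c22 ^ 2 = 1) :
    hnorm ((u * c21 + d * c11, u * c22 + d * c12, -(detC * (u * d))) : Hei)
      ≤ max 1 (Real.sqrt |detC|) * (|u| + |d|) := by
  have hud : (0:ℝ) ≤ |u| + |d| := by positivity
  have hip : |c21 * c11 + c22 * c12| ≤ 1 := by
    rw [abs_le]
    constructor <;> nlinarith [sq_nonneg (c21 * c12 - c22 * c11),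
      sq_nonneg (c21 * c11 + c22 * c12 + 1), sq_nonneg (c21 * c11 + c22 * c12 - 1)]
  have hcross : u * d * (c21 * c11 + c22 * c12) ≤ |u| * |d| := by
    calc u * d * (c21 * c11 + c22 * c12) ≤ |u * d * (c21 * c11 + c22 * c12)| :=
          le_abs_self _
      _ = |u| * |d| * |c21 * c11 + c22 * c12| := by rw [abs_mul, abs_mul]
      _ ≤ |u| * |d| * 1 := by
          apply mul_le_mul_of_nonneg_left hip; positivity
      _ = |u| * |d| := by ring
  rw [hnorm]
  apply max_le
  · have h2 : (u * c21 + d * c11) ^ 2 + (u * c22 + d * c12) ^ 2 ≤ (|u| + |d|) ^ 2 := by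
      nlinarith [sq_abs u, sq_abs d, hcross]
    calc Real.sqrt ((u * c21 + d * c11) ^ 2 + (u * c22 + d * c12) ^ 2)
        ≤ Real.sqrt ((|u| + |d|) ^ 2) := Real.sqrt_le_sqrt h2
      _ = |u| + |d| := Real.sqrt_sq hud
      _ ≤ max 1 (Real.sqrt |detC|) * (|u| + |d|) := by
          nlinarith [le_max_left 1 (Real.sqrt |detC|)]
  · have h3 : |(-(detC * (u * d)) : ℝ)| = |detC| * |u * d| := by
      rw [abs_neg, abs_mul]
    rw [h3, Real.sqrt_mul (abs_nonneg _)]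
    have h4 : Real.sqrt |u * d| ≤ |u| + |d| := by
      have h5 : |u * d| ≤ (|u| + |d|) ^ 2 := by
        rw [abs_mul]; nlinarith [abs_nonneg u, abs_nonneg d]
      calc Real.sqrt |u * d| ≤ Real.sqrt ((|u| + |d|) ^ 2) := Real.sqrt_le_sqrt h5
        _ = |u| + |d| := Real.sqrt_sq hud
    calc Real.sqrt |detC| * Real.sqrt |u * d| ≤ Real.sqrt |detC| * (|u| + |d|) :=
          mul_le_mul_of_nonneg_left h4 (Real.sqrt_nonneg _)
      _ ≤ max 1 (Real.sqrt |detC|) * (|u| + |d|) :=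
          mul_le_mul_of_nonneg_right (le_max_right _ _) hud

private lemma ball_open (c21 c22 s : ℝ) (n₀ : ℝ × ℝ) :
    IsOpen {p : ℝ × ℝ | hdist (Nemb c21 c22 n₀) (Nemb c21 c22 p) < s} := by
  have hc : Continuous fun p : ℝ × ℝ => hdist (Nemb c21 c22 n₀) (Nemb c21 c22 p) := by
    unfold hdist hnorm hmul hinv Nemb
    dsimp only
    fun_prop
  exact isOpen_lt hc continuous_const

set_option maxHeartbeats 2000000 in
/-- **Directional derivatives (Corollary 3.2).** Under the intrinsic graph setup, fix
`n̄ = η̄₂ b₂ + τ̄₁ e₃ ∈ B^N_{n₀,s}`, set `η̄₁ = φ₂ n̄`, `x̄ = Φ₂ n̄` and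
`z̄ = b₂ + 2 η̄₁ det C e₃ ∈ N`. Then `f₁ ∘ Φ₂` is partially differentiable at `n̄` along `z̄`
and `∂_{z̄}(f₁ ∘ Φ₂)(n̄) = −(1 / Y₁f₂(x̄)) · det [[Y₁f₁(x̄), Y₂f₁(x̄)], [Y₁f₂(x̄), Y₂f₂(x̄)]]`. -/
theorem directional_derivative_along_zbar
    (Ω : Set Hei) (hΩ : IsOpen Ω)
    (f₁ f₂ : Hei → ℝ) (gradf₁ gradf₂ : Hei → Hei →L[ℝ] ℝ)
    (hf₁ : C1H Ω f₁ gradf₁) (hf₂ : C1H Ω f₂ gradf₂)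
    (c11 c12 c21 c22 : ℝ)
    (hb1 : c11 ^ 2 + c12 ^ 2 = 1) (hb2 : c21 ^ 2 + c22 ^ 2 = 1)
    (detC : ℝ) (hdetC : detC = c11 * c22 - c12 * c21) (hdet : detC ≠ 0)
    (x₀ : Hei) (hx₀ : x₀ ∈ Ω)
    (hsurj : Function.Surjective (fun z : Hei => (gradf₁ x₀ z, gradf₂ x₀ z)))
    (hY1x₀ : gradf₂ x₀ (b1v c11 c12) ≠ 0)
    (n₀ : ℝ × ℝ) (r₀ : ℝ) (hfact : hmul (Nemb c21 c22 n₀) (r₀ • b1v c11 c12) = x₀)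
    (s : ℝ) (hs : 0 < s)
    (φ₂ : ℝ × ℝ → ℝ)
    (ballN : Set (ℝ × ℝ))
    (hball : ballN = {p : ℝ × ℝ | hdist (Nemb c21 c22 n₀) (Nemb c21 c22 p) < s})
    (hφcont : ContinuousOn φ₂ ballN)
    (hmaps : ∀ p ∈ ballN, intrinsicGraph c11 c12 c21 c22 φ₂ p ∈ Ω)
    (hΦ₀ : intrinsicGraph c11 c12 c21 c22 φ₂ n₀ = x₀)
    (hlevel : ∀ p ∈ ballN, f₂ (intrinsicGraph c11 c12 c21 c22 φ₂ p) = f₂ x₀)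
    (hY1 : ∀ p ∈ ballN, gradf₂ (intrinsicGraph c11 c12 c21 c22 φ₂ p) (b1v c11 c12) ≠ 0)
    (etaBar2 tauBar1 : ℝ) (hnbar : (etaBar2, tauBar1) ∈ ballN)
    (etaBar1 : ℝ) (hetaBar1 : etaBar1 = φ₂ (etaBar2, tauBar1))
    (xBar : Hei) (hxBar : xBar = intrinsicGraph c11 c12 c21 c22 φ₂ (etaBar2, tauBar1))
    (D : ℝ)
    (hD : D = gradf₁ xBar (b1v c11 c12) * gradf₂ xBar (b2v c21 c22)
           - gradf₁ xBar (b2v c21 c22) * gradf₂ xBar (b1v c11 c12)) :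
    HasDerivAt
      (fun u : ℝ => f₁ (intrinsicGraph c11 c12 c21 c22 φ₂
        (etaBar2 + u, tauBar1 + u * (2 * etaBar1 * detC))))
      (-(1 / gradf₂ xBar (b1v c11 c12)) * D) 0 := by
  obtain ⟨hf₁d, -⟩ := hf₁
  obtain ⟨hf₂d, -⟩ := hf₂
  set Y1 := gradf₂ xBar (b1v c11 c12) with hY1def
  set Y2 := gradf₂ xBar (b2v c21 c22) with hY2def
  set Z1 := gradf₁ xBar (b1v c11 c12) with hZ1def
  set Z2 := gradf₁ xBar (b2v c21 c22) with hZ2def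
  have hY1ne : Y1 ≠ 0 := by rw [hY1def, hxBar]; exact hY1 _ hnbar
  have hY1pos : 0 < |Y1| := abs_pos.mpr hY1ne
  set p : ℝ → ℝ × ℝ := fun u => (etaBar2 + u, tauBar1 + u * (2 * etaBar1 * detC))
    with hpdef
  set X : ℝ → Hei := fun u => intrinsicGraph c11 c12 c21 c22 φ₂ (p u) with hXdef
  set Δ : ℝ → ℝ := fun u => φ₂ (p u) - etaBar1 with hΔdef
  have hp0 : p 0 = (etaBar2, tauBar1) := by simp [hpdef]
  have hΔ0 : Δ 0 = 0 := by simp [hΔdef, hp0, hetaBar1]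
  have hmem0 : p 0 ∈ ballN := by rw [hp0]; exact hnbar
  have hxmem : xBar ∈ Ω := by rw [hxBar]; exact hmaps _ hnbar
  have hX0 : X 0 = xBar := by rw [hXdef]; dsimp only; rw [hp0, ← hxBar]
  -- key coordinate computation
  have key : ∀ u : ℝ, hmul (hinv xBar) (X u)
      = ((u * c21 + Δ u * c11, u * c22 + Δ u * c12,
          -(detC * (u * Δ u))) : Hei) := by
    intro u
    rw [hXdef, hxBar]
    exact key_coord c11 c12 c21 c22 detC hdetC φ₂ etaBar2 tauBar1 u
      (φ₂ (p u)) etaBar1 (by rw [hpdef]) hetaBar1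
  -- distance bound
  set K := max 1 (Real.sqrt |detC|) with hKdef
  have hK1 : (1:ℝ) ≤ K := le_max_left _ _
  have hK0 : (0:ℝ) < K := lt_of_lt_of_le one_pos hK1
  have hdb : ∀ u : ℝ, hdist xBar (X u) ≤ K * (|u| + |Δ u|) := by
    intro u
    rw [hdist, key u]
    exact hnorm_bound c11 c12 c21 c22 detC u (Δ u) hb1 hb2
  have hdist0 : ∀ u : ℝ, 0 ≤ hdist xBar (X u) := by
    intro u
    rw [hdist, hnorm]
    exact le_trans (Real.sqrt_nonneg _) (le_max_left _ _)
  -- differential formulas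
  have hL₁ : ∀ u : ℝ, gradf₁ xBar (hmul (hinv xBar) (X u)) = u * Z2 + Δ u * Z1 := by
    intro u
    rw [key u]
    exact apply_L _ (hf₁d xBar hxmem).1 c11 c12 c21 c22 u (Δ u) _
  have hL₂ : ∀ u : ℝ, gradf₂ xBar (hmul (hinv xBar) (X u)) = u * Y2 + Δ u * Y1 := by
    intro u
    rw [key u]
    exact apply_L _ (hf₂d xBar hxmem).1 c11 c12 c21 c22 u (Δ u) _
  -- level set
  have hlev : ∀ u : ℝ, p u ∈ ballN → f₂ (X u) = f₂ xBar := by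
    intro u hu
    rw [hXdef]
    dsimp only
    rw [hlevel _ hu, hxBar, hlevel _ hnbar]
  -- continuity
  have hopen : IsOpen ballN := by rw [hball]; exact ball_open c21 c22 s n₀
  have hpc : Continuous p := by rw [hpdef]; fun_prop
  have hΔc : ContinuousAt Δ 0 := by
    have h1 : ContinuousAt φ₂ (p 0) := hφcont.continuousAt (hopen.mem_nhds hmem0)
    exact (h1.comp hpc.continuousAt).sub continuousAt_const
  have hΔsmall : ∀ θ : ℝ, 0 < θ → ∀ᶠ u in nhds 0, |Δ u| < θ := by
    intro θ hθ
    have h2 : Filter.Tendsto Δ (nhds 0) (nhds 0) := by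
      have h2' := hΔc.tendsto
      rw [hΔ0] at h2'
      exact h2'
    have h3 := (Metric.tendsto_nhds.mp h2) θ hθ
    filter_upwards [h3] with u hu
    simpa [Real.dist_eq] using hu
  have husmall : ∀ θ : ℝ, 0 < θ → ∀ᶠ u : ℝ in nhds 0, |u| < θ := by
    intro θ hθ
    have h3 := Metric.ball_mem_nhds (0:ℝ) hθ
    filter_upwards [h3] with u hu
    simpa [Metric.mem_ball, Real.dist_eq] using hu
  have hmemev : ∀ᶠ u in nhds 0, p u ∈ ballN :=
    hpc.continuousAt.preimage_mem_nhds (hopen.mem_nhds hmem0)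
  -- Step D: |Δ u| ≤ M |u| eventually
  obtain ⟨δ₂, hδ₂pos, hδ₂⟩ := (hf₂d xBar hxmem).2 (|Y1| / (2 * K)) (by positivity)
  set M := 2 * |Y2| / |Y1| + 1 with hMdef
  have hM0 : (0:ℝ) < M := by positivity
  have hDb : ∀ᶠ u in nhds 0, |Δ u| ≤ M * |u| := by
    filter_upwards [hmemev, hΔsmall (δ₂ / (2 * K)) (by positivity),
      husmall (δ₂ / (2 * K)) (by positivity)] with u hu1 hu2 hu3
    have hd2 : hdist xBar (X u) ≤ δ₂ := by
      refine le_trans (hdb u) ?_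
      have : |u| + |Δ u| ≤ δ₂ / (2 * K) + δ₂ / (2 * K) := by linarith
      calc K * (|u| + |Δ u|) ≤ K * (δ₂ / (2 * K) + δ₂ / (2 * K)) :=
            mul_le_mul_of_nonneg_left this (le_of_lt hK0)
        _ = δ₂ := by field_simp; ring
    have h := hδ₂ (X u) hd2
    rw [hL₂ u, hlev u hu1, Real.norm_eq_abs] at h
    have h' : |u * Y2 + Δ u * Y1| ≤ |Y1| / 2 * (|u| + |Δ u|) := by
      have e1 : |f₂ xBar - f₂ xBar - (u * Y2 + Δ u * Y1)| = |u * Y2 + Δ u * Y1| := by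
        rw [sub_self, zero_sub, abs_neg]
      rw [e1] at h
      refine le_trans h ?_
      calc |Y1| / (2 * K) * hdist xBar (X u)
          ≤ |Y1| / (2 * K) * (K * (|u| + |Δ u|)) :=
            mul_le_mul_of_nonneg_left (hdb u) (by positivity)
        _ = |Y1| / 2 * (|u| + |Δ u|) := by field_simp
    have h2 : |Δ u * Y1| ≤ |u * Y2 + Δ u * Y1| + |u * Y2| := by
      have e2 := abs_add_le (u * Y2 + Δ u * Y1) (-(u * Y2))
      rw [abs_neg] at e2
      calc |Δ u * Y1| = |(u * Y2 + Δ u * Y1) + -(u * Y2)| := by congr 1; ring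
        _ ≤ _ := e2
    have h3 : |Δ u| * |Y1| ≤ (2 * |Y2| + |Y1|) * |u| := by
      have h2' : |Δ u| * |Y1| ≤ |u * Y2 + Δ u * Y1| + |u| * |Y2| := by
        rw [← abs_mul, ← abs_mul]; exact h2
      nlinarith [h2', h', abs_nonneg u, abs_nonneg (Δ u)]
    calc |Δ u| = |Δ u| * |Y1| / |Y1| := by field_simp
      _ ≤ (2 * |Y2| + |Y1|) * |u| / |Y1| := by gcongr
      _ = M * |u| := by rw [hMdef]; field_simp
  -- Step E: the derivative
  have main : HasDerivAt (fun u : ℝ => f₁ (X u)) (-(1 / Y1) * D) 0 := by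
    rw [hasDerivAt_iff_isLittleO, Asymptotics.isLittleO_iff]
    intro c hc
    set Q := 1 + |Z1| / |Y1| with hQdef
    have hQ0 : (0:ℝ) < Q := by positivity
    set R := K * (1 + M) with hRdef
    have hR0 : (0:ℝ) < R := by positivity
    set ε := c / (2 * Q * R) with hεdef
    have hε0 : (0:ℝ) < ε := by positivity
    obtain ⟨δa, hδapos, hδa⟩ := (hf₁d xBar hxmem).2 ε hε0
    obtain ⟨δb, hδbpos, hδb⟩ := (hf₂d xBar hxmem).2 ε hε0
    filter_upwards [hmemev, hDb, husmall (min δa δb / R) (by positivity)]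
      with u hu1 hu2 hu3
    have hdR : hdist xBar (X u) ≤ R * |u| := by
      refine le_trans (hdb u) ?_
      rw [hRdef]
      calc K * (|u| + |Δ u|) ≤ K * (|u| + M * |u|) := by
            apply mul_le_mul_of_nonneg_left _ (le_of_lt hK0); linarith
        _ = K * (1 + M) * |u| := by ring
    have hdmin : hdist xBar (X u) ≤ min δa δb := by
      refine le_trans hdR ?_
      calc R * |u| ≤ R * (min δa δb / R) := by
            apply mul_le_mul_of_nonneg_left (le_of_lt hu3) (le_of_lt hR0)
        _ = min δa δb := by field_simp
    have ha := hδa (X u) (le_trans hdmin (min_le_left _ _))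
    have hb := hδb (X u) (le_trans hdmin (min_le_right _ _))
    rw [hL₁ u, Real.norm_eq_abs] at ha
    rw [hL₂ u, Real.norm_eq_abs, hlev u hu1] at hb
    have hb' : |u * Y2 + Δ u * Y1| ≤ ε * hdist xBar (X u) := by
      have e1 : |f₂ xBar - f₂ xBar - (u * Y2 + Δ u * Y1)| = |u * Y2 + Δ u * Y1| := by
        rw [sub_self, zero_sub, abs_neg]
      rw [e1] at hb; exact hb
    -- put it together
    simp only [Real.norm_eq_abs, sub_zero, smul_eq_mul]
    rw [hX0]
    have hid : f₁ (X u) - f₁ xBar - u * (-(1 / Y1) * D)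
        = (f₁ (X u) - f₁ xBar - (u * Z2 + Δ u * Z1)) + Z1 / Y1 * (u * Y2 + Δ u * Y1) := by
      rw [hD]
      field_simp
      ring
    rw [hid]
    have hstep : |(f₁ (X u) - f₁ xBar - (u * Z2 + Δ u * Z1)) + Z1 / Y1 * (u * Y2 + Δ u * Y1)|
        ≤ ε * hdist xBar (X u) + |Z1| / |Y1| * (ε * hdist xBar (X u)) := by
      refine le_trans (abs_add_le _ _) ?_
      refine add_le_add ha ?_
      rw [abs_mul, abs_div]
      exact mul_le_mul_of_nonneg_left hb' (by positivity)
    refine le_trans hstep ?_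
    have e2 : ε * hdist xBar (X u) + |Z1| / |Y1| * (ε * hdist xBar (X u))
        = Q * (ε * hdist xBar (X u)) := by rw [hQdef]; ring
    rw [e2]
    calc Q * (ε * hdist xBar (X u)) ≤ Q * (ε * (R * |u|)) := by
          apply mul_le_mul_of_nonneg_left _ (le_of_lt hQ0)
          exact mul_le_mul_of_nonneg_left hdR (le_of_lt hε0)
      _ = c / 2 * |u| := by rw [hεdef]; field_simp
      _ ≤ c * |u| := by nlinarith [abs_nonneg u]
  exact main
end
end

section
/- Under the intrinsic graph setup below, identify N with ℝ² via (η,t) ↦ η b₂ + t e₃. Let I and J be open intervals with I×J ⊂ B^N_{n₀,s} and let [a,b] ⊂ I. Let τ ∈ C¹([a,b],J) be a characteristic of the Burgers equation ∂_η φ₂ + det(C) ∂_t(φ₂²) = −(Y₂f₂∘Φ₂)/(Y₁f₂∘Φ₂), that is, τ̇(η) = 2 det(C) φ₂(η, τ(η)) for all η. Set γ(η) = η b₂ + τ(η) e₃. Then the composition f₁∘Φ₂∘γ is differentiable at every η ∈ [a,b] and (d/dη)(f₁∘Φ₂∘γ)(η) = −(1/Y₁f₂(Φ₂(γ(η))))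 · det [[Y₁f₁(Φ₂(γ(η))), Y₂f₁(Φ₂(γ(η)))],[Y₁f₂(Φ₂(γ(η))), Y₂f₂(Φ₂(γ(η)))]]. -/
/-!
Write `X u = Φ₂ (u, τ u)` and `Δφ u = φ₂ (u, τ u) - φ₂ (η, τ η)`. Since `f₂ ∘ X` is constant, the
Pansu expansion of `f₂` at `X η` gives the linear relation
`(u - η) Y₂f₂ + Δφ u · Y₁f₂ = o(d (X η, X u))`. The vertical component of `(X η)⁻¹ · X u` is
`τ u - τ η - det C (φ₂ (γ η) + φ₂ (γ u)) (u - η)`, which the characteristic equation and the mean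
value theorem bound by `3 |det C| · sup |Δφ| · |u - η|`. Evaluated at a maximiser of `|Δφ|` on a
short interval, the two bounds force `d (X η, X u) = O(|u - η|)`, so the Pansu expansion of `f₁`
becomes an ordinary first-order expansion in `u - η` and `Δφ u`, and eliminating `Δφ u` by the
linear relation gives the derivative.
-/

noncomputable section

open Set

open Filter Topology Asymptotics

lemma hdist_nonneg (x y : Hei) : 0 ≤ hdist x y :=
  le_max_of_le_left (Real.sqrt_nonneg _)

lemma hnorm_le (x : Hei) : hnorm x ≤ |x.1| + |x.2.1| + √|x.2.2| := by
  refine max_le ?_ (by linarith [abs_nonneg x.1, abs_nonneg x.2.1])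
  refine Real.sqrt_le_iff.2 ⟨by positivity, ?_⟩
  nlinarith [sq_abs x.1, sq_abs x.2.1, abs_nonneg x.1, abs_nonneg x.2.1, Real.sqrt_nonneg |x.2.2|,
    mul_nonneg (abs_nonneg x.1) (abs_nonneg x.2.1)]

lemma hmul_hinv_intrinsicGraph (c11 c12 c21 c22 : ℝ) (φ₂ : ℝ × ℝ → ℝ) (q r : ℝ × ℝ) :
    hmul (hinv (intrinsicGraph c11 c12 c21 c22 φ₂ q)) (intrinsicGraph c11 c12 c21 c22 φ₂ r) =
      ((r.1 - q.1) * c21 + (φ₂ r - φ₂ q) * c11,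
       (r.1 - q.1) * c22 + (φ₂ r - φ₂ q) * c12,
       r.2 - q.2 - (c11 * c22 - c12 * c21) * (φ₂ q + φ₂ r) * (r.1 - q.1)) := by
  simp only [intrinsicGraph, Nemb, b1v, hmul, hinv, Prod.smul_mk, smul_eq_mul, Prod.mk.injEq]
  exact ⟨by ring, by ring, by ring⟩

namespace IsHDerivAt

variable {F : Type*} [NormedAddCommGroup F] [NormedSpace ℝ F] {f : Hei → F} {L : Hei →L[ℝ] F}
  {x : Hei}

/-- Homogeneity forces `L e₃ = 0`, since `δ₂ e₃ = 4 e₃` while `L (δ₂ e₃) = 2 L e₃`. -/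
lemma apply_e3 (h : IsHDerivAt f L x) : L (0, 0, 1) = 0 := by
  have h2 := h.1 2 two_pos (0, 0, 1)
  have hdil2 : hdil 2 ((0 : ℝ), (0 : ℝ), (1 : ℝ)) = (4 : ℝ) • ((0 : ℝ), (0 : ℝ), (1 : ℝ)) := by
    simp only [hdil, Prod.smul_mk, smul_eq_mul]; norm_num
  rw [hdil2, map_smul] at h2
  have h0 : (2 : ℝ) • L (0, 0, 1) = 0 := by
    rw [show (2 : ℝ) = 4 - 2 by norm_num, sub_smul, h2, sub_self]
  exact (smul_eq_zero.1 h0).resolve_left two_ne_zero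

lemma apply_combination (h : IsHDerivAt f L x) (c11 c12 c21 c22 s t v : ℝ) :
    L (s * c21 + t * c11, s * c22 + t * c12, v) = s • L (b2v c21 c22) + t • L (b1v c11 c12) := by
  have hdecomp : ((s * c21 + t * c11, s * c22 + t * c12, v) : Hei)
      = s • b2v c21 c22 + t • b1v c11 c12 + v • ((0 : ℝ), (0 : ℝ), (1 : ℝ)) := by
    simp only [b1v, b2v, Prod.smul_mk, smul_eq_mul, Prod.mk_add_mk, Prod.mk.injEq]
    exact ⟨by ring, by ring, by ring⟩
  rw [hdecomp, map_add, map_add, map_smul, map_smul, map_smul, h.apply_e3, smul_zero, add_zero]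

lemma isLittleO_comp {α : Type*} {l : Filter α} {X : α → Hei} (h : IsHDerivAt f L x)
    (hX : Tendsto (fun u => hdist x (X u)) l (𝓝 0)) :
    (fun u => f (X u) - f x - L (hmul (hinv x) (X u))) =o[l] fun u => hdist x (X u) := by
  refine IsLittleO.of_bound fun ε hε => ?_
  obtain ⟨δ, hδ, hrem⟩ := h.2 ε hε
  filter_upwards [hX.eventually (Iic_mem_nhds hδ)] with u hu
  exact (hrem (X u) hu).trans (mul_le_mul_of_nonneg_left (le_abs_self _) hε.le)

end IsHDerivAt

/-- Up to a constant factor this bounds the distance between the points `Φ₂ (η, τ η)` and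
`Φ₂ (u, τ u)` of an intrinsic graph over the curve `(u, τ u)`, with `φ u = φ₂ (u, τ u)`;
the radicand is the vertical component of `Φ₂ (η, τ η)⁻¹ · Φ₂ (u, τ u)`. -/
def characteristicGauge (φ τ : ℝ → ℝ) (k η u : ℝ) : ℝ :=
  |u - η| + |φ u - φ η| + √|τ u - τ η - k * (φ η + φ u) * (u - η)|

section CharacteristicGauge

variable {φ τ : ℝ → ℝ} {k η : ℝ}

lemma characteristicGauge_nonneg (u : ℝ) : 0 ≤ characteristicGauge φ τ k η u := by
  unfold characteristicGauge; positivity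

lemma tendsto_characteristicGauge {S : Set ℝ} (hφ : ContinuousWithinAt φ S η)
    (hτ : ContinuousWithinAt τ S η) :
    Tendsto (characteristicGauge φ τ k η) (𝓝[S] η) (𝓝 0) := by
  have hcont : ContinuousWithinAt (characteristicGauge φ τ k η) S η := by
    unfold characteristicGauge; fun_prop
  simpa [characteristicGauge] using hcont.tendsto

end CharacteristicGauge

section IntrinsicGraph

variable {c11 c12 c21 c22 : ℝ} {φ₂ : ℝ × ℝ → ℝ} {τ : ℝ → ℝ} {η : ℝ}

lemma hdist_intrinsicGraph_le (u : ℝ) :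
    hdist (intrinsicGraph c11 c12 c21 c22 φ₂ (η, τ η)) (intrinsicGraph c11 c12 c21 c22 φ₂ (u, τ u))
      ≤ (1 + |c11| + |c12| + |c21| + |c22|) *
        characteristicGauge (fun u => φ₂ (u, τ u)) τ (c11 * c22 - c12 * c21) η u := by
  unfold hdist characteristicGauge
  rw [hmul_hinv_intrinsicGraph]
  refine (hnorm_le _).trans ?_
  simp only
  set s := u - η
  set t := φ₂ (u, τ u) - φ₂ (η, τ η)
  have h₁ : |s * c21 + t * c11| ≤ |s| * |c21| + |t| * |c11| := by
    simpa only [abs_mul] using abs_add_le (s * c21) (t * c11)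
  have h₂ : |s * c22 + t * c12| ≤ |s| * |c22| + |t| * |c12| := by
    simpa only [abs_mul] using abs_add_le (s * c22) (t * c12)
  set R := √|τ u - τ η - (c11 * c22 - c12 * c21) * (φ₂ (η, τ η) + φ₂ (u, τ u)) * s|
  have hR : 0 ≤ R := Real.sqrt_nonneg _
  have hc : 0 ≤ |c11| + |c12| + |c21| + |c22| := by positivity
  nlinarith [mul_nonneg hc hR, abs_nonneg s, abs_nonneg t,
    mul_nonneg (abs_nonneg s) (abs_nonneg c11), mul_nonneg (abs_nonneg s) (abs_nonneg c12),
    mul_nonneg (abs_nonneg t) (abs_nonneg c21), mul_nonneg (abs_nonneg t) (abs_nonneg c22)]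

lemma IsHDerivAt.isLittleO_characteristicGauge {f : Hei → ℝ} {L : Hei →L[ℝ] ℝ} {S : Set ℝ}
    (h : IsHDerivAt f L (intrinsicGraph c11 c12 c21 c22 φ₂ (η, τ η)))
    (hφ : ContinuousWithinAt (fun u => φ₂ (u, τ u)) S η) (hτ : ContinuousWithinAt τ S η) :
    (fun u => f (intrinsicGraph c11 c12 c21 c22 φ₂ (u, τ u))
        - f (intrinsicGraph c11 c12 c21 c22 φ₂ (η, τ η))
        - ((u - η) * L (b2v c21 c22) + (φ₂ (u, τ u) - φ₂ (η, τ η)) * L (b1v c11 c12)))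
      =o[𝓝[S] η] characteristicGauge (fun u => φ₂ (u, τ u)) τ (c11 * c22 - c12 * c21) η := by
  set M := 1 + |c11| + |c12| + |c21| + |c22|
  have hdist_isBigO : (fun u => hdist (intrinsicGraph c11 c12 c21 c22 φ₂ (η, τ η))
      (intrinsicGraph c11 c12 c21 c22 φ₂ (u, τ u))) =O[𝓝[S] η]
      characteristicGauge (fun u => φ₂ (u, τ u)) τ (c11 * c22 - c12 * c21) η := by
    refine IsBigO.of_bound M (Eventually.of_forall fun u => ?_)
    rw [Real.norm_of_nonneg (hdist_nonneg _ _),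
      Real.norm_of_nonneg (characteristicGauge_nonneg u)]
    exact hdist_intrinsicGraph_le u
  have hdist_tendsto : Tendsto (fun u => hdist (intrinsicGraph c11 c12 c21 c22 φ₂ (η, τ η))
      (intrinsicGraph c11 c12 c21 c22 φ₂ (u, τ u))) (𝓝[S] η) (𝓝 0) := by
    refine squeeze_zero (fun u => hdist_nonneg _ _) hdist_intrinsicGraph_le ?_
    simpa using (tendsto_characteristicGauge hφ hτ).const_mul M
  refine ((h.isLittleO_comp hdist_tendsto).trans_isBigO hdist_isBigO).congr_left fun u => ?_
  rw [hmul_hinv_intrinsicGraph, h.apply_combination, smul_eq_mul, smul_eq_mul]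

end IntrinsicGraph

section Characteristic

variable {S : Set ℝ} {φ τ : ℝ → ℝ} {k η : ℝ}

/-- Compare `τ` with the line of slope `2 k φ η` by the mean value theorem. -/
lemma abs_characteristic_defect_le (hS : Convex ℝ S)
    (hτ : ∀ w ∈ S, HasDerivWithinAt τ (2 * k * φ w) S w) {F : ℝ}
    (hF : ∀ w ∈ S, |φ w - φ η| ≤ F) (hη : η ∈ S) {v : ℝ} (hv : v ∈ S) :
    |τ v - τ η - k * (φ η + φ v) * (v - η)| ≤ 3 * |k| * F * |v - η| := by
  have hder : ∀ w ∈ S, HasDerivWithinAt (fun z => τ z - 2 * k * φ η * z)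
      (2 * k * (φ w - φ η)) S w := fun w hw =>
    ((hτ w hw).sub ((hasDerivWithinAt_id w S).const_mul (2 * k * φ η))).congr_deriv (by ring)
  have hbound : ∀ w ∈ S, ‖2 * k * (φ w - φ η)‖ ≤ 2 * |k| * F := fun w hw => by
    rw [Real.norm_eq_abs, abs_mul, abs_mul, abs_two]
    exact mul_le_mul_of_nonneg_left (hF w hw) (by positivity)
  have hmvt := hS.norm_image_sub_le_of_norm_hasDerivWithin_le hder hbound hη hv
  rw [Real.norm_eq_abs, Real.norm_eq_abs] at hmvt
  have hφv : |φ η - φ v| ≤ F := abs_sub_comm (φ η) (φ v) ▸ hF v hv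
  calc |τ v - τ η - k * (φ η + φ v) * (v - η)|
      = |(τ v - 2 * k * φ η * v - (τ η - 2 * k * φ η * η)) + k * (φ η - φ v) * (v - η)| := by
        congr 1; ring
    _ ≤ 2 * |k| * F * |v - η| + |k| * F * |v - η| := by
        refine (abs_add_le _ _).trans (add_le_add hmvt ?_)
        rw [abs_mul, abs_mul]
        gcongr
    _ = 3 * |k| * F * |v - η| := by ring

lemma characteristicGauge_le (hS : Convex ℝ S)
    (hτ : ∀ w ∈ S, HasDerivWithinAt τ (2 * k * φ w) S w) {F : ℝ}
    (hF : ∀ w ∈ S, |φ w - φ η| ≤ F) (hη : η ∈ S) {v : ℝ} (hv : v ∈ S) :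
    characteristicGauge φ τ k η v ≤ (1 + 3 / 2 * |k|) * |v - η| + 3 / 2 * F := by
  have hF0 : 0 ≤ F := (abs_nonneg _).trans (hF η hη)
  have hsqrt : √(3 * |k| * F * |v - η|) ≤ (F + 3 * |k| * |v - η|) / 2 :=
    Real.sqrt_le_iff.2 ⟨by positivity, by nlinarith [sq_nonneg (F - 3 * |k| * |v - η|)]⟩
  have hdefect := Real.sqrt_le_sqrt (abs_characteristic_defect_le hS hτ hF hη hv)
  unfold characteristicGauge
  linarith [hF v hv]

/-- Near `η` the relation `hlevel` bounds the oscillation `F` of `φ` by `C t + gauge / 3`, while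
`characteristicGauge_le` bounds the gauge by `(1 + 3|k|/2) t + 3F/2`; evaluating both at a maximiser
of the oscillation on `S ∩ [η - t, η + t]` gives `F = O(t)`. -/
lemma characteristicGauge_isBigO (hSc : Convex ℝ S) (hSk : IsClosed S) (hφ : ContinuousOn φ S)
    (hτ : ∀ w ∈ S, HasDerivWithinAt τ (2 * k * φ w) S w) (hη : η ∈ S) {A B : ℝ} (hB : B ≠ 0)
    (hlevel : (fun u => (u - η) * A + (φ u - φ η) * B) =o[𝓝[S] η] characteristicGauge φ τ k η) :
    characteristicGauge φ τ k η =O[𝓝[S] η] fun u => u - η := by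
  set C := |A| / |B|
  set K := |k|
  have hB' : 0 < |B| := abs_pos.2 hB
  have hosc : ∀ᶠ u in 𝓝[S] η, |φ u - φ η| ≤ C * |u - η| + characteristicGauge φ τ k η u / 3 := by
    filter_upwards [hlevel.bound (by positivity : 0 < |B| / 3)] with u hu
    rw [Real.norm_eq_abs, Real.norm_of_nonneg (characteristicGauge_nonneg u)] at hu
    have hmul : |φ u - φ η| * |B| ≤ |A| * |u - η| + |B| / 3 * characteristicGauge φ τ k η u :=
      calc |φ u - φ η| * |B| = |((u - η) * A + (φ u - φ η) * B) - (u - η) * A| := by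
            rw [add_sub_cancel_left, abs_mul]
        _ ≤ |(u - η) * A + (φ u - φ η) * B| + |(u - η) * A| := abs_sub _ _
        _ ≤ |A| * |u - η| + |B| / 3 * characteristicGauge φ τ k η u := by
            rw [abs_mul (u - η)]; linarith
    calc |φ u - φ η| ≤ (|A| * |u - η| + |B| / 3 * characteristicGauge φ τ k η u) / |B| :=
          (le_div_iff₀ hB').2 hmul
      _ = C * |u - η| + characteristicGauge φ τ k η u / 3 := by
          simp only [C]; field_simp
  obtain ⟨r, hr, hball⟩ := Metric.mem_nhdsWithin_iff.1 hosc
  refine IsBigO.of_bound (2 + 3 * C + 3 * K) ?_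
  filter_upwards [inter_mem_nhdsWithin S (Metric.ball_mem_nhds η hr)] with u ⟨huS, hur⟩
  rw [Real.norm_of_nonneg (characteristicGauge_nonneg u), Real.norm_eq_abs]
  set t := |u - η|
  set T := S ∩ Metric.closedBall η t
  have hηT : η ∈ T := ⟨hη, Metric.mem_closedBall_self (abs_nonneg _)⟩
  have hTt : ∀ v ∈ T, |v - η| ≤ t := fun v hv => by simpa [Real.dist_eq] using hv.2
  obtain ⟨w, hwT, hwmax⟩ := ((isCompact_closedBall η t).inter_left hSk).exists_isMaxOn
    (f := fun v => |φ v - φ η|) ⟨η, hηT⟩ ((hφ.mono inter_subset_left).sub continuousOn_const).abs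
  have hgauge : ∀ v ∈ T, characteristicGauge φ τ k η v ≤ (1 + 3 / 2 * K) * t
      + 3 / 2 * |φ w - φ η| := fun v hv => by
    refine (characteristicGauge_le (hSc.inter (convex_closedBall η t))
      (fun x hx => (hτ x hx.1).mono inter_subset_left) (fun x hx => hwmax hx) hηT hv).trans ?_
    gcongr
    exact hTt v hv
  have hwr : w ∈ Metric.ball η r := by
    rw [Metric.mem_ball, Real.dist_eq]
    exact (hTt w hwT).trans_lt (by simpa [Real.dist_eq] using hur)
  have hw : |φ w - φ η| ≤ C * t + characteristicGauge φ τ k η w / 3 :=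
    (hball ⟨hwr, hwT.1⟩).trans (by gcongr; exact hTt w hwT)
  nlinarith [hgauge u ⟨huS, by simp [Real.dist_eq, t]⟩, hgauge w hwT]

end Characteristic

lemma hasDerivWithinAt_of_expansion_of_constraint {g ψ ρ : ℝ → ℝ} {S : Set ℝ}
    {η A₁ B₁ A₂ B₂ : ℝ} (hB : B₂ ≠ 0) (hρ : ρ =O[𝓝[S] η] fun u => u - η)
    (hexp : (fun u => g u - g η - ((u - η) * A₁ + ψ u * B₁)) =o[𝓝[S] η] ρ)
    (hcon : (fun u => (u - η) * A₂ + ψ u * B₂) =o[𝓝[S] η] ρ) :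
    HasDerivWithinAt g (-(1 / B₂) * (B₁ * A₂ - A₁ * B₂)) S η := by
  rw [hasDerivWithinAt_iff_isLittleO]
  refine ((hexp.add (hcon.const_mul_left (B₁ / B₂))).trans_isBigO hρ).congr_left fun u => ?_
  simp only [smul_eq_mul]
  field_simp
  ring

theorem chain_rule_along_characteristics_general
    (Ω : Set Hei)
    (f₁ f₂ : Hei → ℝ) (gradf₁ gradf₂ : Hei → Hei →L[ℝ] ℝ)
    (hf₁ : C1H Ω f₁ gradf₁) (hf₂ : C1H Ω f₂ gradf₂)
    (c11 c12 c21 c22 : ℝ)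
    (detC : ℝ) (hdetC : detC = c11 * c22 - c12 * c21)
    (x₀ : Hei)
    (φ₂ : ℝ × ℝ → ℝ)
    (ballN : Set (ℝ × ℝ))
    (hφcont : ContinuousOn φ₂ ballN)
    (hmaps : ∀ p ∈ ballN, intrinsicGraph c11 c12 c21 c22 φ₂ p ∈ Ω)
    (hlevel : ∀ p ∈ ballN, f₂ (intrinsicGraph c11 c12 c21 c22 φ₂ p) = f₂ x₀)
    (hY1 : ∀ p ∈ ballN, gradf₂ (intrinsicGraph c11 c12 c21 c22 φ₂ p) (b1v c11 c12) ≠ 0)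
    (I J : Set ℝ) (hIJ : I ×ˢ J ⊆ ballN)
    (a b : ℝ) (habI : Set.Icc a b ⊆ I)
    (τ : ℝ → ℝ)
    (hτJ : Set.MapsTo τ (Set.Icc a b) J)
    (hchar : ∀ η ∈ Set.Icc a b,
      HasDerivWithinAt τ (2 * detC * φ₂ (η, τ η)) (Set.Icc a b) η) :
    ∀ η ∈ Set.Icc a b,
      HasDerivWithinAt (fun y : ℝ => f₁ (intrinsicGraph c11 c12 c21 c22 φ₂ (y, τ y)))
        (-(1 / gradf₂ (intrinsicGraph c11 c12 c21 c22 φ₂ (η, τ η)) (b1v c11 c12)) *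
          (gradf₁ (intrinsicGraph c11 c12 c21 c22 φ₂ (η, τ η)) (b1v c11 c12) *
              gradf₂ (intrinsicGraph c11 c12 c21 c22 φ₂ (η, τ η)) (b2v c21 c22)
            - gradf₁ (intrinsicGraph c11 c12 c21 c22 φ₂ (η, τ η)) (b2v c21 c22) *
              gradf₂ (intrinsicGraph c11 c12 c21 c22 φ₂ (η, τ η)) (b1v c11 c12)))
        (Set.Icc a b) η := by
  subst hdetC
  intro η hη
  set Φ := intrinsicGraph c11 c12 c21 c22 φ₂
  have hcurve : ∀ u ∈ Icc a b, (u, τ u) ∈ ballN := fun u hu => hIJ ⟨habI hu, hτJ hu⟩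
  have hτ : ContinuousOn τ (Icc a b) := fun u hu => (hchar u hu).continuousWithinAt
  have hφ : ContinuousOn (fun u => φ₂ (u, τ u)) (Icc a b) :=
    hφcont.comp (continuousOn_id.prodMk hτ) hcurve
  have hΦη := hmaps _ (hcurve η hη)
  have hexp := (hf₁.1 _ hΦη).isLittleO_characteristicGauge (hφ η hη) (hτ η hη)
  have hcon : (fun u => (u - η) * gradf₂ (Φ (η, τ η)) (b2v c21 c22)
      + (φ₂ (u, τ u) - φ₂ (η, τ η)) * gradf₂ (Φ (η, τ η)) (b1v c11 c12))
      =o[𝓝[Icc a b] η] characteristicGauge (fun u => φ₂ (u, τ u)) τ (c11 * c22 - c12 * c21) η := by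
    refine ((hf₂.1 _ hΦη).isLittleO_characteristicGauge (hφ η hη) (hτ η hη)).neg_left.congr' ?_
      EventuallyEq.rfl
    filter_upwards [self_mem_nhdsWithin] with u hu
    rw [hlevel _ (hcurve u hu), hlevel _ (hcurve η hη)]
    ring
  have hY := hY1 _ (hcurve η hη)
  exact hasDerivWithinAt_of_expansion_of_constraint hY
    (characteristicGauge_isBigO (convex_Icc a b) isClosed_Icc hφ hchar hη hY hcon) hexp hcon

/-- **Chain rule (Theorem 3.3).** Under the intrinsic graph setup, identify `N` with `ℝ²`
via `(η, t) ↦ η b₂ + t e₃`. Let `I`, `J` be open intervals with `I × J ⊆ B^N_{n₀,s}` and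
`[a, b] ⊆ I`, and let `τ ∈ C¹([a,b], J)` be a characteristic of the Burgers equation
`∂_η φ₂ + det C ∂_t (φ₂²) = −(Y₂f₂ ∘ Φ₂)/(Y₁f₂ ∘ Φ₂)`, i.e.
`τ̇ η = 2 det C · φ₂ (η, τ η)`. Set `γ η = η b₂ + τ(η) e₃ = (η, τ η)`. Then
`f₁ ∘ Φ₂ ∘ γ` is differentiable at every `η ∈ [a,b]`, with derivative
`−(1 / Y₁f₂(Φ₂(γ η))) · det [[Y₁f₁(Φ₂(γ η)), Y₂f₁(Φ₂(γ η))], [Y₁f₂(Φ₂(γ η)), Y₂f₂(Φ₂(γ η))]]`. -/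
theorem chain_rule_along_characteristics
    (Ω : Set Hei) (hΩ : IsOpen Ω)
    (f₁ f₂ : Hei → ℝ) (gradf₁ gradf₂ : Hei → Hei →L[ℝ] ℝ)
    (hf₁ : C1H Ω f₁ gradf₁) (hf₂ : C1H Ω f₂ gradf₂)
    (c11 c12 c21 c22 : ℝ)
    (hb1 : c11 ^ 2 + c12 ^ 2 = 1) (hb2 : c21 ^ 2 + c22 ^ 2 = 1)
    (detC : ℝ) (hdetC : detC = c11 * c22 - c12 * c21) (hdet : detC ≠ 0)
    (x₀ : Hei) (hx₀ : x₀ ∈ Ω)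
    (hsurj : Function.Surjective (fun z : Hei => (gradf₁ x₀ z, gradf₂ x₀ z)))
    (hY1x₀ : gradf₂ x₀ (b1v c11 c12) ≠ 0)
    (n₀ : ℝ × ℝ) (r₀ : ℝ) (hfact : hmul (Nemb c21 c22 n₀) (r₀ • b1v c11 c12) = x₀)
    (s : ℝ) (hs : 0 < s)
    (φ₂ : ℝ × ℝ → ℝ)
    (ballN : Set (ℝ × ℝ))
    (hball : ballN = {p : ℝ × ℝ | hdist (Nemb c21 c22 n₀) (Nemb c21 c22 p) < s})
    (hφcont : ContinuousOn φ₂ ballN)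
    (hmaps : ∀ p ∈ ballN, intrinsicGraph c11 c12 c21 c22 φ₂ p ∈ Ω)
    (hΦ₀ : intrinsicGraph c11 c12 c21 c22 φ₂ n₀ = x₀)
    (hlevel : ∀ p ∈ ballN, f₂ (intrinsicGraph c11 c12 c21 c22 φ₂ p) = f₂ x₀)
    (hY1 : ∀ p ∈ ballN, gradf₂ (intrinsicGraph c11 c12 c21 c22 φ₂ p) (b1v c11 c12) ≠ 0)
    (I J : Set ℝ) (hIo : IsOpen I) (hIc : I.OrdConnected) (hJo : IsOpen J)
    (hJc : J.OrdConnected) (hIJ : I ×ˢ J ⊆ ballN)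
    (a b : ℝ) (hab : a < b) (habI : Set.Icc a b ⊆ I)
    (τ : ℝ → ℝ) (hτC1 : ContDiffOn ℝ 1 τ (Set.Icc a b))
    (hτJ : Set.MapsTo τ (Set.Icc a b) J)
    (hchar : ∀ η ∈ Set.Icc a b,
      HasDerivWithinAt τ (2 * detC * φ₂ (η, τ η)) (Set.Icc a b) η) :
    ∀ η ∈ Set.Icc a b,
      HasDerivWithinAt (fun y : ℝ => f₁ (intrinsicGraph c11 c12 c21 c22 φ₂ (y, τ y)))
        (-(1 / gradf₂ (intrinsicGraph c11 c12 c21 c22 φ₂ (η, τ η)) (b1v c11 c12)) *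
          (gradf₁ (intrinsicGraph c11 c12 c21 c22 φ₂ (η, τ η)) (b1v c11 c12) *
              gradf₂ (intrinsicGraph c11 c12 c21 c22 φ₂ (η, τ η)) (b2v c21 c22)
            - gradf₁ (intrinsicGraph c11 c12 c21 c22 φ₂ (η, τ η)) (b2v c21 c22) *
              gradf₂ (intrinsicGraph c11 c12 c21 c22 φ₂ (η, τ η)) (b1v c11 c12)))
        (Set.Icc a b) η :=
  chain_rule_along_characteristics_general Ω f₁ f₂ gradf₁ gradf₂ hf₁ hf₂ c11 c12 c21 c22 detC hdetC
    x₀ φ₂ ballN hφcont hmaps hlevel hY1 I J hIJ a b habI τ hτJ hchar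
end
end

section
/- Let X be a metric space and let ζ: [0,1] → X be a continuous curve with the property that for every point q ∈ X the preimage ζ⁻¹({q}) is an interval (i.e. whenever ζ(ξ₁) = ζ(ξ₂) and ξ₁ ≤ ξ ≤ ξ₂, then ζ(ξ) = ζ(ξ₁)). Then there exists an injective continuous curve ζ̃: [0,1] → X with ζ̃([0,1]) = ζ([0,1]), provided ζ is not constant; if ζ is constant its image is a single point. -/
/-!
The curve factors through a continuous monotone function `g : [0,1] → ℝ` with the same fibres
as `ζ`, namely `g t = ∑ₖ 2⁻ᵏ / (1 + d(pₖ, ζ[0,t]))` for a sequence `pₖ` dense in the image.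
Since fibres are intervals, `ζ[0,t]` depends only on `ζ t`, while `ζ t ∉ ζ[0,s]` when `s < t`
and `ζ s ≠ ζ t`; some `pₖ` close to `ζ t` then makes `g s < g t`. The map `g` is a closed map
from `[0,1]` onto `[g 0, g 1]`, hence a quotient map, and `ζ` descends to an injective continuous
map on that interval.
-/

open Set Metric Function TopologicalSpace

section Factorization

variable {α β X : Type*} [TopologicalSpace α] [CompactSpace α] [TopologicalSpace β] [T2Space β]
  [TopologicalSpace X]

theorem Continuous.exists_injective_comp_eq_of_fiber_iff {f : α → β} {γ : α → X}
    (hf : Continuous f) (hsurj : Surjective f) (hγ : Continuous γ)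
    (hfib : ∀ a b, f a = f b ↔ γ a = γ b) :
    ∃ η : β → X, Continuous η ∧ Injective η ∧ η ∘ f = γ := by
  have hcomp : γ ∘ surjInv hsurj ∘ f = γ :=
    funext fun a => (hfib _ _).1 (surjInv_eq hsurj (f a))
  refine ⟨γ ∘ surjInv hsurj, ?_, fun x y hxy => ?_, hcomp⟩
  · exact (hf.isClosedMap.isQuotientMap hf hsurj).continuous_iff.2 (by rwa [comp_assoc, hcomp])
  · simpa only [surjInv_eq] using (hfib _ _).2 hxy

end Factorization

section InfDistSeries

variable {X : Type*} [PseudoMetricSpace X]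

theorem Metric.exists_infDist_lt_of_not_subset_closure {A B : Set X} {p : ℕ → X}
    (hA : A.Nonempty) (hBp : B ⊆ closure (range p)) (hAB : ¬ B ⊆ closure A) :
    ∃ k, infDist (p k) B < infDist (p k) A := by
  obtain ⟨y, hyB, hyA⟩ := not_subset.1 hAB
  have hε : 0 < infDist y A := (infDist_pos_iff_notMem_closure hA).1 hyA
  obtain ⟨_, ⟨k, rfl⟩, hk⟩ := Metric.mem_closure_iff.1 (hBp hyB) _ (half_pos hε)
  have hB : infDist (p k) B ≤ dist y (p k) := dist_comm (p k) y ▸ infDist_le_dist_of_mem hyB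
  have hA : infDist y A ≤ infDist (p k) A + dist y (p k) := infDist_le_infDist_add_dist
  exact ⟨k, by linarith⟩

theorem Metric.one_add_infDist_pos (x : X) (A : Set X) : 0 < 1 + infDist x A :=
  add_pos_of_pos_of_nonneg one_pos infDist_nonneg

noncomputable def infDistSeries (p : ℕ → X) (A : Set X) : ℝ :=
  ∑' k, (1 / 2 : ℝ) ^ k / (1 + infDist (p k) A)

theorem norm_infDistSeries_term_le (p : ℕ → X) (A : Set X) (k : ℕ) :
    ‖(1 / 2 : ℝ) ^ k / (1 + infDist (p k) A)‖ ≤ (1 / 2) ^ k := by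
  rw [Real.norm_of_nonneg (div_nonneg (by positivity) (one_add_infDist_pos (p k) A).le)]
  exact div_le_self (by positivity) (le_add_of_nonneg_right infDist_nonneg)

theorem summable_infDistSeries (p : ℕ → X) (A : Set X) :
    Summable fun k => (1 / 2 : ℝ) ^ k / (1 + infDist (p k) A) :=
  .of_norm_bounded summable_geometric_two (norm_infDistSeries_term_le p A)

variable {p : ℕ → X} {A B : Set X}

theorem infDistSeries_mono (hA : A.Nonempty) (hAB : A ⊆ B) :
    infDistSeries p A ≤ infDistSeries p B :=
  (summable_infDistSeries p A).tsum_le_tsum (fun k => by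
    gcongr
    · exact one_add_infDist_pos (p k) B
    · exact infDist_le_infDist_of_subset hAB hA) (summable_infDistSeries p B)

theorem infDistSeries_lt (hA : A.Nonempty) (hAB : A ⊆ B) (hBp : B ⊆ closure (range p))
    (hBA : ¬ B ⊆ closure A) : infDistSeries p A < infDistSeries p B := by
  obtain ⟨k, hk⟩ := exists_infDist_lt_of_not_subset_closure hA hBp hBA
  refine (summable_infDistSeries p A).tsum_lt_tsum (i := k) (fun j => ?_) ?_
    (summable_infDistSeries p B)
  · gcongr
    · exact one_add_infDist_pos (p j) B
    · exact infDist_le_infDist_of_subset hAB hA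
  · gcongr
    exact one_add_infDist_pos (p k) B

theorem Continuous.infDistSeries {Y : Type*} [TopologicalSpace Y] {S : Y → Set X}
    (hS : ∀ x, Continuous fun y => infDist x (S y)) :
    Continuous fun y => infDistSeries p (S y) :=
  continuous_tsum (fun k => continuous_const.div (continuous_const.add (hS (p k)))
    fun y => (one_add_infDist_pos (p k) (S y)).ne') summable_geometric_two
    fun k y => norm_infDistSeries_term_le p (S y) k

end InfDistSeries

section OrdConnectedFibers

variable {α X : Type*} [LinearOrder α] {γ : α → X}

theorem Iic_eq_range_min (t : α) : Iic t = range fun v => min v t :=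
  Subset.antisymm (fun u hu => ⟨u, min_eq_left hu⟩) (range_subset_iff.2 fun v => min_le_right v t)

theorem image_Iic_eq_of_apply_eq (hfib : ∀ x, (γ ⁻¹' {x}).OrdConnected) {s t : α} (hst : s ≤ t)
    (h : γ s = γ t) : γ '' Iic s = γ '' Iic t := by
  refine (image_mono (Iic_subset_Iic.2 hst)).antisymm ?_
  rintro _ ⟨u, hut, rfl⟩
  rcases le_total u s with hus | hsu
  · exact mem_image_of_mem γ hus
  · exact ⟨s, le_rfl, h.trans ((hfib (γ t)).out h rfl ⟨hsu, hut⟩).symm⟩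

theorem apply_notMem_image_Iic (hfib : ∀ x, (γ ⁻¹' {x}).OrdConnected) {s t : α} (hst : s ≤ t)
    (h : γ s ≠ γ t) : γ t ∉ γ '' Iic s := by
  rintro ⟨u, hus, hut⟩
  exact h ((hfib (γ t)).out hut rfl ⟨hus, hst⟩)

variable [TopologicalSpace α] [OrderClosedTopology α] [CompactSpace α]

theorem Metric.continuous_infDist_image_Iic [PseudoMetricSpace X] (hγ : Continuous γ) (x : X) :
    Continuous fun t => infDist x (γ '' Iic t) := by
  have h (t : α) :
      infDist x (γ '' Iic t) = sInf ((fun v => dist x (γ (min v t))) '' univ) := by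
    rw [infDist_eq_iInf, iInf, ← image_eq_range, Iic_eq_range_min, ← range_comp, ← range_comp,
      image_univ]
    rfl
  simp only [h]
  exact isCompact_univ.continuous_sInf (by fun_prop)

theorem exists_monotone_continuous_fiber_iff [SeparableSpace α] [Nonempty α] [MetricSpace X]
    (hγ : Continuous γ) (hfib : ∀ x, (γ ⁻¹' {x}).OrdConnected) :
    ∃ g : α → ℝ, Continuous g ∧ Monotone g ∧ ∀ s t, g s = g t ↔ γ s = γ t := by
  obtain ⟨q, hq⟩ := exists_dense_seq α
  have hdense : range γ ⊆ closure (range (γ ∘ q)) := by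
    rw [← image_univ, ← hq.closure_range, range_comp]
    exact image_closure_subset_closure_image hγ
  have hne (t : α) : (γ '' Iic t).Nonempty := ⟨γ t, mem_image_of_mem γ le_rfl⟩
  have hlt (s t : α) (hst : s ≤ t) (h : γ s ≠ γ t) :
      infDistSeries (γ ∘ q) (γ '' Iic s) < infDistSeries (γ ∘ q) (γ '' Iic t) := by
    refine infDistSeries_lt (hne s) (image_mono (Iic_subset_Iic.2 hst))
      ((image_subset_range _ _).trans hdense) fun hsub => ?_
    rw [(isClosed_Iic.isCompact.image hγ).isClosed.closure_eq] at hsub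
    exact apply_notMem_image_Iic hfib hst h (hsub (mem_image_of_mem γ le_rfl))
  refine ⟨fun t => infDistSeries (γ ∘ q) (γ '' Iic t),
    Continuous.infDistSeries (continuous_infDist_image_Iic hγ),
    fun s t hst => infDistSeries_mono (hne s) (image_mono (Iic_subset_Iic.2 hst)),
    fun s t => ⟨fun hg => ?_, fun h => ?_⟩⟩
  · by_contra h
    rcases le_total s t with hst | hts
    · exact (hlt s t hst h).ne hg
    · exact (hlt t s hts (Ne.symm h)).ne' hg
  · rcases le_total s t with hst | hts
    · exact congrArg (infDistSeries _) (image_Iic_eq_of_apply_eq hfib hst h)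
    · exact congrArg (infDistSeries _) (image_Iic_eq_of_apply_eq hfib hts h.symm).symm

end OrdConnectedFibers

open unitInterval in
theorem exists_continuous_injective_range_eq {X : Type*} [MetricSpace X] {γ : I → X}
    (hγ : Continuous γ) (hfib : ∀ x, (γ ⁻¹' {x}).OrdConnected) (h01 : γ 0 ≠ γ 1) :
    ∃ η : I → X, Continuous η ∧ Injective η ∧ range η = range γ := by
  obtain ⟨g, hgc, hgm, hgfib⟩ := exists_monotone_continuous_fiber_iff hγ hfib
  have hlt : g 0 < g 1 := (hgm nonneg').lt_of_ne (mt (hgfib 0 1).1 h01)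
  set f : I → Icc (g 0) (g 1) := fun t => ⟨g t, hgm nonneg', hgm le_one'⟩
  have hfsurj : Surjective f := fun y =>
    let ⟨t, ht⟩ := intermediate_value_univ 0 1 hgc y.2
    ⟨t, Subtype.ext ht⟩
  obtain ⟨η, hηc, hηi, hηf⟩ := (hgc.subtype_mk _).exists_injective_comp_eq_of_fiber_iff hfsurj hγ
    fun s t => Subtype.ext_iff.trans (hgfib s t)
  refine ⟨η ∘ (iccHomeoI _ _ hlt).symm, hηc.comp (Homeomorph.continuous _),
    hηi.comp (Homeomorph.injective _), ?_⟩
  rw [(Homeomorph.surjective _).range_comp, ← hηf, hfsurj.range_comp]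

/-- **Injective reparametrization of a curve with interval preimages.** Let `X` be a metric
space and `ζ : [0,1] → X` a continuous curve such that every point-preimage is an interval
(i.e. `ζ ξ₁ = ζ ξ₂` and `ξ₁ ≤ ξ ≤ ξ₂` imply `ζ ξ = ζ ξ₁`). If `ζ` is not constant on
`[0,1]`, then there is an injective continuous curve `ζ' : [0,1] → X` with
`ζ'([0,1]) = ζ([0,1])`; if `ζ` is constant on `[0,1]`, its image is a single point. -/
theorem injective_reparametrization_of_curve
    {X : Type*} [MetricSpace X] (ζ : ℝ → X)
    (hcont : ContinuousOn ζ (Set.Icc 0 1))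
    (hpre : ∀ ξ₁ ξ₂ ξ : ℝ, ξ₁ ∈ Set.Icc (0 : ℝ) 1 → ξ₂ ∈ Set.Icc (0 : ℝ) 1 →
      ξ₁ ≤ ξ → ξ ≤ ξ₂ → ζ ξ₁ = ζ ξ₂ → ζ ξ = ζ ξ₁) :
    ((¬ ∀ ξ₁ ∈ Set.Icc (0 : ℝ) 1, ∀ ξ₂ ∈ Set.Icc (0 : ℝ) 1, ζ ξ₁ = ζ ξ₂) →
      ∃ ζ' : ℝ → X, ContinuousOn ζ' (Set.Icc 0 1) ∧ Set.InjOn ζ' (Set.Icc 0 1) ∧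
        ζ' '' Set.Icc 0 1 = ζ '' Set.Icc 0 1) ∧
    ((∀ ξ₁ ∈ Set.Icc (0 : ℝ) 1, ∀ ξ₂ ∈ Set.Icc (0 : ℝ) 1, ζ ξ₁ = ζ ξ₂) →
      ∃ q : X, ζ '' Set.Icc 0 1 = {q}) := by
  have h0 : (0 : ℝ) ∈ Icc (0 : ℝ) 1 := left_mem_Icc.2 zero_le_one
  have h1 : (1 : ℝ) ∈ Icc (0 : ℝ) 1 := right_mem_Icc.2 zero_le_one
  refine ⟨fun hnc => ?_, fun hconst => ⟨ζ 0, ?_⟩⟩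
  · have hfib : ∀ x, ((Icc 0 1).domRestrict ζ ⁻¹' {x}).OrdConnected := fun x =>
      ⟨fun a ha b hb c hc => (hpre a b c a.2 b.2 hc.1 hc.2 (ha.trans hb.symm)).trans ha⟩
    have h01 : ζ 0 ≠ ζ 1 := fun h => hnc fun a ha b hb =>
      (hpre 0 1 a h0 h1 ha.1 ha.2 h).trans (hpre 0 1 b h0 h1 hb.1 hb.2 h).symm
    obtain ⟨η, hηc, hηi, hηr⟩ := exists_continuous_injective_range_eq hcont.domRestrict hfib h01
    refine ⟨IccExtend zero_le_one η, (continuous_IccExtend_iff.2 hηc).continuousOn,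
      fun x hx y hy hxy => ?_, ?_⟩
    · rw [IccExtend_of_mem _ _ hx, IccExtend_of_mem _ _ hy] at hxy
      exact congrArg Subtype.val (hηi hxy)
    · rw [← range_domRestrict ζ, ← hηr, ← Subtype.range_coe (s := Icc (0 : ℝ) 1), ← range_comp]
      exact congrArg range (funext (IccExtend_val zero_le_one η))
  · exact eq_singleton_iff_unique_mem.2
      ⟨mem_image_of_mem ζ h0, fun _ ⟨t, ht, hζt⟩ => hζt ▸ hconst t ht 0 h0⟩
end
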